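/- Let A = KQ/I be an acyclic string algebra. Then there exists a coloring c of the quiver Q such that the induced ideal I_c is contained in I. In particular, any acyclic string algebra is a quotient of an acyclic gentle algebra with the same quiver. -/

import Mathlib

/- ------------------------------------------------------------------
  Common framework: quivers, matrix representation varieties with the
  Zariski topology, the base-change group action, (semi-)stability,
  Schur modules, direct sums, moduli spaces as topological GIT
  quotients, semi-invariants, normality via coordinate rings, and the
  tame / Schur-tame / strictly wild conditions.
------------------------------------------------------------------ -/

namespace ModuliPaper

/-- A finite quiver: vertices `V`, arrows `Ar`, tail `s` and head `t`. -/
structure Quiv where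
  V : Type
  Ar : Type
  [fintV : Fintype V]
  [decV : DecidableEq V]
  [fintA : Fintype Ar]
  [decA : DecidableEq Ar]
  s : Ar → V
  t : Ar → V

attribute [instance] Quiv.fintV Quiv.decV Quiv.fintA Quiv.decA

variable (K : Type) [Field K]

/-- Affine space over `K`, carrying the Zariski topology (below). -/
def AffSp (ι : Type) : Type := ι → K

/-- The Zariski topology on affine space: the basic open sets are the
complements of hypersurfaces. -/
noncomputable instance AffSp.topologicalSpace (ι : Type) : TopologicalSpace (AffSp K ι) :=
  TopologicalSpace.generateFrom
    {U | ∃ p : MvPolynomial ι K, U = {x : AffSp K ι | MvPolynomial.eval x p ≠ 0}}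

/-- A point of the representation space of the quiver `Q` with dimension
vector `d`: a matrix for every arrow. -/
structure Rep (Q : Quiv) (d : Q.V → ℕ) where
  mat : ∀ a : Q.Ar, Matrix (Fin (d (Q.t a))) (Fin (d (Q.s a))) K

/-- The coordinates of the representation space. -/
def CoordIdx (Q : Quiv) (d : Q.V → ℕ) : Type :=
  Σ a : Q.Ar, Fin (d (Q.t a)) × Fin (d (Q.s a))

def Rep.coords {Q : Quiv} {d : Q.V → ℕ} (M : Rep K Q d) : AffSp K (CoordIdx Q d) :=
  fun c => M.mat c.1 c.2.1 c.2.2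

/-- The Zariski topology on the representation space. -/
noncomputable instance Rep.topologicalSpace (Q : Quiv) (d : Q.V → ℕ) :
    TopologicalSpace (Rep K Q d) :=
  TopologicalSpace.induced (Rep.coords K) inferInstance

/-- The base change group `GL(d) = ∏ₓ GL(d(x),K)` (as a family of invertible
matrices) acting by simultaneous conjugation. -/
def glAct {Q : Quiv} {d : Q.V → ℕ}
    (g : ∀ x : Q.V, Matrix.GeneralLinearGroup (Fin (d x)) K) (M : Rep K Q d) :
    Rep K Q d :=
  ⟨fun a => (g (Q.t a) : Matrix (Fin (d (Q.t a))) (Fin (d (Q.t a))) K) * M.mat a *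
    (((g (Q.s a))⁻¹ : Matrix.GeneralLinearGroup (Fin (d (Q.s a))) K) :
      Matrix (Fin (d (Q.s a))) (Fin (d (Q.s a))) K)⟩

/-- Two points are isomorphic as modules iff they lie in the same `GL(d)`-orbit. -/
def Iso {Q : Quiv} {d : Q.V → ℕ} (M N : Rep K Q d) : Prop :=
  ∃ g, glAct K g M = N

/-- The `GL(d)`-orbit of a point of the representation space. -/
def glOrbit {Q : Quiv} {d : Q.V → ℕ} (M : Rep K Q d) : Set (Rep K Q d) :=
  {N | Iso K M N}

def IsGLInvariant {Q : Quiv} {d : Q.V → ℕ} (C : Set (Rep K Q d)) : Prop :=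
  ∀ g M, M ∈ C → glAct K g M ∈ C

/-- `C` is the closure of a single `GL(d)`-orbit. -/
def IsOrbitClosure {Q : Quiv} {d : Q.V → ℕ} (C : Set (Rep K Q d)) : Prop :=
  ∃ M : Rep K Q d, C = closure (glOrbit K M)

/-- Paths in a quiver, via Mathlib's `Quiver.Path`. -/
instance quivQuiver (Q : Quiv) : Quiver Q.V :=
  ⟨fun x y => {a : Q.Ar // Q.s a = x ∧ Q.t a = y}⟩

/-- The linear map attached to an arrow by a representation. -/
def arrowEval {Q : Quiv} {d : Q.V → ℕ} (M : Rep K Q d) {x y : Q.V} (e : x ⟶ y) :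
    (Fin (d x) → K) →ₗ[K] (Fin (d y) → K) := by
  obtain ⟨a, rfl, rfl⟩ := e
  exact (M.mat a).mulVecLin

/-- The linear map attached to a path by a representation. -/
def pathEval {Q : Quiv} {d : Q.V → ℕ} (M : Rep K Q d) :
    {x y : Q.V} → Quiver.Path x y → ((Fin (d x) → K) →ₗ[K] (Fin (d y) → K))
  | _, _, Quiver.Path.nil => LinearMap.id
  | _, _, Quiver.Path.cons p e => (arrowEval K M e).comp (pathEval M p)

/-- The evaluation of a K-linear combination of parallel paths (an element of the
path algebra) on a representation. -/
noncomputable def relEval {Q : Quiv} {d : Q.V → ℕ} (M : Rep K Q d) {x y : Q.V}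
    (r : Quiver.Path x y →₀ K) : (Fin (d x) → K) →ₗ[K] (Fin (d y) → K) :=
  r.sum fun p c => c • pathEval K M p

/-- A set of relations for a quiver: admissible elements of the path algebra. -/
structure RelSet (Q : Quiv) where
  rels : Set (Σ x y : Q.V, (Quiver.Path x y →₀ K))

/-- The module variety `mod(A,d)` of the bound quiver algebra `A = KQ/I`,
`I = ⟨rels⟩`: the locus where all relations vanish. -/
noncomputable def modVar {Q : Quiv} (R : RelSet K Q) (d : Q.V → ℕ) : Set (Rep K Q d) :=
  {M | ∀ r ∈ R.rels, relEval K M r.2.2 = 0}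

/-- `Q` has no oriented cycles. -/
def Quiv.IsAcyclic (Q : Quiv) : Prop :=
  ∀ (x : Q.V) (p : Quiver.Path x x), p = Quiver.Path.nil

/-- Admissibility of the ideal of relations, encoded semantically:
every relation lies in (the span of paths of) length `≥ 2`, and some power of the
arrow ideal is contained in the ideal of relations (i.e. sufficiently long paths
act by `0` on every module of the algebra). -/
noncomputable def RelSet.IsAdmissible {Q : Quiv} (R : RelSet K Q) : Prop :=
  (∀ r ∈ R.rels, ∀ p ∈ (r.2.2).support, 2 ≤ p.length) ∧
  ∃ L : ℕ, ∀ (d : Q.V → ℕ), ∀ M ∈ modVar K R d, ∀ (x y : Q.V) (p : Quiver.Path x y),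
    L ≤ p.length → pathEval K M p = 0

/-- A subrepresentation (= submodule) of a representation. -/
structure SubRep {Q : Quiv} {d : Q.V → ℕ} (M : Rep K Q d) where
  space : ∀ x : Q.V, Submodule K (Fin (d x) → K)
  stable : ∀ a : Q.Ar, ∀ v ∈ space (Q.s a), (M.mat a).mulVec v ∈ space (Q.t a)

/-- The dimension vector of a subrepresentation. -/
noncomputable def SubRep.dimVec {Q : Quiv} {d : Q.V → ℕ} {M : Rep K Q d}
    (W : SubRep K M) : Q.V → ℕ :=
  fun x => Module.finrank K (W.space x)

/-- The pairing `θ(e) = ∑ₓ θ(x) e(x)` of a weight with a dimension vector. -/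
def wt {Q : Quiv} (θ : Q.V → ℤ) (e : Q.V → ℕ) : ℤ := ∑ x : Q.V, θ x * (e x : ℤ)

/-- King's θ-semi-stability. -/
def IsSemiStable {Q : Quiv} {d : Q.V → ℕ} (θ : Q.V → ℤ) (M : Rep K Q d) : Prop :=
  wt θ d = 0 ∧ ∀ W : SubRep K M, wt θ (W.dimVec K) ≤ 0

/-- King's θ-stability. -/
def IsStable {Q : Quiv} {d : Q.V → ℕ} (θ : Q.V → ℤ) (M : Rep K Q d) : Prop :=
  d ≠ 0 ∧ wt θ d = 0 ∧
    ∀ W : SubRep K M, W.dimVec K ≠ 0 → W.dimVec K ≠ d → wt θ (W.dimVec K) < 0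

/-- Morphisms of representations. -/
def IsHom {Q : Quiv} {d d' : Q.V → ℕ} (M : Rep K Q d) (N : Rep K Q d')
    (φ : ∀ x : Q.V, Matrix (Fin (d' x)) (Fin (d x)) K) : Prop :=
  ∀ a : Q.Ar, φ (Q.t a) * M.mat a = N.mat a * φ (Q.s a)

/-- Endomorphisms of a representation. -/
def IsEndo {Q : Quiv} {d : Q.V → ℕ} (M : Rep K Q d)
    (φ : ∀ x : Q.V, Matrix (Fin (d x)) (Fin (d x)) K) : Prop :=
  IsHom K M M φ

/-- A Schur module: all endomorphisms are scalar, i.e. `End_A(M) ≅ K`. -/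
def IsSchur {Q : Quiv} {d : Q.V → ℕ} (M : Rep K Q d) : Prop :=
  ∀ φ, IsEndo K M φ → ∃ c : K, ∀ x : Q.V, φ x = c • (1 : Matrix (Fin (d x)) (Fin (d x)) K)

/-- The direct sum of two representations. -/
def dsum {Q : Quiv} {d₁ d₂ : Q.V → ℕ} (M : Rep K Q d₁) (N : Rep K Q d₂) :
    Rep K Q (d₁ + d₂) :=
  ⟨fun a => Matrix.reindex finSumFinEquiv finSumFinEquiv
    (Matrix.fromBlocks (M.mat a) 0 0 (N.mat a))⟩

/-- Transport of a representation along an equality of dimension vectors. -/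
def recast {Q : Quiv} {d d' : Q.V → ℕ} (h : d = d') (M : Rep K Q d) : Rep K Q d' :=
  h ▸ M

/-- The dimension vector of a list of representations. -/
def sumDim {Q : Quiv} : List (Σ e : Q.V → ℕ, Rep K Q e) → (Q.V → ℕ)
  | [] => 0
  | x :: L => x.1 + sumDim L

/-- The direct sum of a list of representations. -/
def listSum {Q : Quiv} : (L : List (Σ e : Q.V → ℕ, Rep K Q e)) → Rep K Q (sumDim K L)
  | [] => ⟨fun _ => 0⟩
  | x :: L => dsum K x.2 (listSum L)

/-- `M` is isomorphic to the direct sum of the members of the list `L`. -/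
def IsDirectSumOf {Q : Quiv} {d : Q.V → ℕ} (M : Rep K Q d)
    (L : List (Σ e : Q.V → ℕ, Rep K Q e)) : Prop :=
  ∃ h : sumDim K L = d, Iso K (recast K h (listSum K L)) M

/-- Indecomposability of a representation. -/
def Indec {Q : Quiv} {d : Q.V → ℕ} (M : Rep K Q d) : Prop :=
  d ≠ 0 ∧ ∀ (d₁ d₂ : Q.V → ℕ) (M₁ : Rep K Q d₁) (M₂ : Rep K Q d₂) (h : d₁ + d₂ = d),
    d₁ ≠ 0 → d₂ ≠ 0 → ¬ Iso K (recast K h (dsum K M₁ M₂)) M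

/-- An irreducible component of a (closed) subvariety `Z` of the representation
space: a maximal irreducible closed subset of `Z`. -/
def IsIrrComp {Q : Quiv} {d : Q.V → ℕ} (Z C : Set (Rep K Q d)) : Prop :=
  C ⊆ Z ∧ IsClosed C ∧ IsIrreducible C ∧
    ∀ D : Set (Rep K Q d), D ⊆ Z → IsClosed D → IsIrreducible D → C ⊆ D → C = D

/-- The θ-semi-stable locus of `C`. -/
def ssLocus {Q : Quiv} {d : Q.V → ℕ} (C : Set (Rep K Q d)) (θ : Q.V → ℤ) :
    Set (Rep K Q d) :=
  {M | M ∈ C ∧ IsSemiStable K θ M}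

/-- S-equivalence on the semistable locus: orbit closures meet inside the
semistable locus.  The GIT quotient identifies exactly S-equivalent points. -/
def SEquiv {Q : Quiv} {d : Q.V → ℕ} (C : Set (Rep K Q d)) (θ : Q.V → ℤ)
    (M N : ↥(ssLocus K C θ)) : Prop :=
  (closure (glOrbit K M.1) ∩ closure (glOrbit K N.1) ∩ ssLocus K C θ).Nonempty

/-- The moduli space `M(C)^{ss}_θ` of θ-semi-stable modules in `C`, realized
(as a topological space) as the quotient of the semistable locus of `C` by
S-equivalence; its points are the θ-polystable modules in `C`. -/
def ModuliSpace {Q : Quiv} {d : Q.V → ℕ} (C : Set (Rep K Q d)) (θ : Q.V → ℤ) : Type :=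
  Quot (SEquiv K C θ)

noncomputable instance {Q : Quiv} {d : Q.V → ℕ} (C : Set (Rep K Q d)) (θ : Q.V → ℤ) :
    TopologicalSpace (ModuliSpace K C θ) :=
  instTopologicalSpaceQuot

/-- The image of `C^{ss}_θ` in the moduli space of the ambient variety `Z`:
this is `M(C)^{ss}_θ` as a (closed) subvariety of `M(Z)^{ss}_θ`. -/
def moduliImage {Q : Quiv} {d : Q.V → ℕ} (Z C : Set (Rep K Q d)) (θ : Q.V → ℤ) :
    Set (ModuliSpace K Z θ) :=
  Quot.mk _ '' {M : ↥(ssLocus K Z θ) | M.1 ∈ C}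

/-- The `m`-th symmetric power of a topological space. -/
def SymPow (m : ℕ) (X : Type*) [TopologicalSpace X] : Type _ :=
  Quot (fun f g : Fin m → X => ∃ σ : Equiv.Perm (Fin m), f = g ∘ σ)

noncomputable instance (m : ℕ) (X : Type*) [TopologicalSpace X] :
    TopologicalSpace (SymPow m X) :=
  instTopologicalSpaceQuot

/-- Projective `m`-space over `K` with its Zariski topology (quotient of the
punctured affine cone). -/
def ProjSpace (m : ℕ) : Type :=
  Quot (fun v w : {x : AffSp K (Fin (m + 1)) // ∃ i, x i ≠ 0} =>
    ∃ c : K, c ≠ 0 ∧ ∀ i, w.1 i = c * v.1 i)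

noncomputable instance (m : ℕ) : TopologicalSpace (ProjSpace K m) :=
  instTopologicalSpaceQuot

/-- A product of projective spaces `ℙ^{m 0} × ⋯ × ℙ^{m (n-1)}` over `K`, with its
Zariski topology (quotient of a product of punctured affine cones, carrying the
Zariski topology of the total affine space). -/
def ProdProj (n : ℕ) (m : Fin n → ℕ) : Type :=
  Quot (fun v w : {x : AffSp K (Σ i : Fin n, Fin (m i + 1)) // ∀ i, ∃ j, x ⟨i, j⟩ ≠ 0} =>
    ∃ c : Fin n → K, (∀ i, c i ≠ 0) ∧ ∀ i j, w.1 ⟨i, j⟩ = c i * v.1 ⟨i, j⟩)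

noncomputable instance (n : ℕ) (m : Fin n → ℕ) : TopologicalSpace (ProdProj K n m) :=
  instTopologicalSpaceQuot

end ModuliPaper
namespace ModuliPaper

variable (K : Type) [Field K]

/- --------------------- semi-invariants --------------------- -/

/-- The value of the character `χ_θ` of `GL(d)` at `g`:
`χ_θ(g) = ∏ₓ det(g(x))^{θ(x)}`. -/
noncomputable def chiWt {Q : Quiv} {d : Q.V → ℕ} (θ : Q.V → ℤ)
    (g : ∀ x : Q.V, Matrix.GeneralLinearGroup (Fin (d x)) K) : K :=
  ∏ x : Q.V, ((g x : Matrix (Fin (d x)) (Fin (d x)) K).det) ^ (θ x)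

/-- A semi-invariant of weight `χ_θ` on `C`: a regular (polynomial) function on
`C` satisfying `f(g·M) = χ_θ(g)·f(M)`. -/
def IsSemiInvariant {Q : Quiv} {d : Q.V → ℕ} (C : Set (Rep K Q d)) (θ : Q.V → ℤ)
    (f : ↥C → K) : Prop :=
  (∃ p : MvPolynomial (CoordIdx Q d) K,
      ∀ M : ↥C, f M = MvPolynomial.eval (Rep.coords K M.1) p) ∧
  ∀ (g) (M : ↥C) (h : glAct K g M.1 ∈ C), f ⟨glAct K g M.1, h⟩ = chiWt K θ g * f M

/-- The space `SI(C)_θ` of semi-invariants of weight `χ_θ` on `C`. -/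
noncomputable def SIModule {Q : Quiv} {d : Q.V → ℕ} (C : Set (Rep K Q d))
    (θ : Q.V → ℤ) : Submodule K (↥C → K) where
  carrier := {f | IsSemiInvariant K C θ f}
  add_mem' := by
    rintro f₁ f₂ ⟨⟨p₁, hp₁⟩, hw₁⟩ ⟨⟨p₂, hp₂⟩, hw₂⟩
    refine ⟨⟨p₁ + p₂, fun M => ?_⟩, fun g M h => ?_⟩
    · simp [hp₁ M, hp₂ M]
    · have := hw₁ g M h; have := hw₂ g M h
      simp only [Pi.add_apply, *]; ring
  zero_mem' := ⟨⟨0, fun M => by simp⟩, fun g M h => by simp⟩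
  smul_mem' := by
    rintro c f ⟨⟨p, hp⟩, hw⟩
    refine ⟨⟨c • p, fun M => ?_⟩, fun g M h => ?_⟩
    · simp only [Pi.smul_apply, smul_eq_mul, hp M]; exact (MvPolynomial.smul_eval _ _ _).symm
    · have := hw g M h
      simp only [Pi.smul_apply, smul_eq_mul, *]; ring

/- --------------------- coordinate rings and normality --------------------- -/

/-- The vanishing ideal of a subset of the representation space. -/
noncomputable def vanishingIdeal {Q : Quiv} {d : Q.V → ℕ} (C : Set (Rep K Q d)) :
    Ideal (MvPolynomial (CoordIdx Q d) K) where
  carrier := {p | ∀ M ∈ C, MvPolynomial.eval (Rep.coords K M) p = 0}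
  add_mem' := by intro p q hp hq M hM; simp [hp M hM, hq M hM]
  zero_mem' := by intro M hM; simp
  smul_mem' := by intro c p hp M hM; simp [smul_eq_mul, hp M hM]

/-- The coordinate ring `K[C]` of a subvariety of the representation space. -/
noncomputable def coordRing {Q : Quiv} {d : Q.V → ℕ} (C : Set (Rep K Q d)) : Type :=
  MvPolynomial (CoordIdx Q d) K ⧸ vanishingIdeal K C

noncomputable instance {Q : Quiv} {d : Q.V → ℕ} (C : Set (Rep K Q d)) :
    CommRing (coordRing K C) :=
  Ideal.Quotient.commRing _

/-- Normality of a variety: its coordinate ring is an integrally closed domain. -/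
def IsNormalVar {Q : Quiv} {d : Q.V → ℕ} (C : Set (Rep K Q d)) : Prop :=
  IsDomain (coordRing K C) ∧ IsIntegrallyClosed (coordRing K C)

/- --------------------- gentle and string algebras --------------------- -/

/-- "at most one element" of a set. -/
def AtMostOne {α : Type*} (s : Set α) : Prop := ∀ a ∈ s, ∀ b ∈ s, a = b

/-- "at most two elements" of a set. -/
def AtMostTwo {α : Type*} (s : Set α) : Prop :=
  ∀ a ∈ s, ∀ b ∈ s, ∀ c ∈ s, a = b ∨ a = c ∨ b = c

/-- A set of monomial (length-two) relations: pairs `(a,b)` of composable arrows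
(`a` followed by `b`), generating the ideal `I = ⟨{ba : (a,b) ∈ R}⟩`. -/
structure PairRels (Q : Quiv) where
  R : Set (Q.Ar × Q.Ar)
  comp : ∀ p ∈ R, Q.t p.1 = Q.s p.2

/-- The module variety of the algebra `KQ/⟨R⟩` with length-two monomial
relations `R`: the locus where all composites `M(b)M(a)`, `(a,b) ∈ R`, vanish. -/
def pairModVar {Q : Quiv} (P : PairRels Q) (d : Q.V → ℕ) : Set (Rep K Q d) :=
  {M | ∀ a b, (hab : (a, b) ∈ P.R) →
    ∀ (i : Fin (d (Q.t b))) (j : Fin (d (Q.s a))),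
      ∑ k : Fin (d (Q.t a)),
        M.mat b i (finCongr (congrArg d (P.comp (a, b) hab)) k) * M.mat a k j = 0}

/-- The gentle conditions on a bound quiver `(Q, I)` with `I` generated by the
length-two paths in `R`. -/
def PairRels.IsGentle {Q : Quiv} (P : PairRels Q) : Prop :=
  (∀ x : Q.V, AtMostTwo {a | Q.s a = x} ∧ AtMostTwo {a | Q.t a = x}) ∧
  (∀ a : Q.Ar, AtMostOne {b | Q.t a = Q.s b ∧ (a, b) ∉ P.R} ∧
               AtMostOne {b | Q.t b = Q.s a ∧ (b, a) ∉ P.R}) ∧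
  (∀ a : Q.Ar, AtMostOne {b | (a, b) ∈ P.R} ∧ AtMostOne {b | (b, a) ∈ P.R})

/-- The length-two path `a`-then-`b` in `Q`. -/
def path2 {Q : Quiv} (a b : Q.Ar) (h : Q.t a = Q.s b) : Quiver.Path (Q.s a) (Q.t b) :=
  (Quiver.Path.nil.cons (⟨a, rfl, rfl⟩ : (Q.s a : Q.V) ⟶ Q.t a)).cons
    (⟨b, h.symm, rfl⟩ : (Q.t a : Q.V) ⟶ Q.t b)

/-- A set of monomial relations (paths of length `≥ 2`). -/
structure MonRels (Q : Quiv) where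
  R : Set (Σ x y : Q.V, Quiver.Path x y)
  len2 : ∀ r ∈ R, 2 ≤ r.2.2.length

/-- The module variety of the monomial algebra `KQ/⟨R⟩`. -/
def monModVar {Q : Quiv} (R : MonRels Q) (d : Q.V → ℕ) : Set (Rep K Q d) :=
  {M | ∀ r ∈ R.R, pathEval K M r.2.2 = 0}

/-- The length-two path `a`-then-`b` lies in the monomial ideal `⟨R⟩`. -/
def MonRels.pairIn {Q : Quiv} (R : MonRels Q) (a b : Q.Ar) : Prop :=
  ∃ h : Q.t a = Q.s b, (⟨Q.s a, Q.t b, path2 a b h⟩ : Σ x y : Q.V, Quiver.Path x y) ∈ R.R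

/-- The string algebra conditions on a monomial bound quiver `(Q, ⟨R⟩)`. -/
def MonRels.IsString {Q : Quiv} (R : MonRels Q) : Prop :=
  (∀ x : Q.V, AtMostTwo {a | Q.s a = x} ∧ AtMostTwo {a | Q.t a = x}) ∧
  (∀ a : Q.Ar, AtMostOne {b | Q.t a = Q.s b ∧ ¬ R.pairIn a b} ∧
               AtMostOne {b | Q.t b = Q.s a ∧ ¬ R.pairIn b a})

/-- A coloring of a quiver: a map on arrows whose fibres are directed paths. -/
structure Coloring (Q : Quiv) (S : Type) where
  c : Q.Ar → S
  isPath : ∀ s : S, ∃ L : List Q.Ar, L.Nodup ∧ (∀ a, a ∈ L ↔ c a = s) ∧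
    L.Chain' (fun a b => Q.t a = Q.s b)

/-- The set of length-two relations `I_c` induced by a coloring: all composable
pairs of arrows of the same color. -/
def colorRels {Q : Quiv} {S : Type} (col : Coloring Q S) : PairRels Q where
  R := {p | Q.t p.1 = Q.s p.2 ∧ col.c p.1 = col.c p.2}
  comp := fun _ hp => hp.1

/- --------------------- band modules (string algebras) --------------------- -/

/-- Over an acyclic string algebra, the indecomposable modules are string and
band modules (Butler–Ringel), and the band modules are exactly the
indecomposables `M` with `dim M = ∑ₐ rank M(a)`. -/
def IsBand {Q : Quiv} {d : Q.V → ℕ} (M : Rep K Q d) : Prop :=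
  Indec K M ∧ (∑ x : Q.V, d x) = ∑ a : Q.Ar, (M.mat a).rank

/-- `M` is (isomorphic to) a direct sum of band modules. -/
def IsSumOfBands {Q : Quiv} {d : Q.V → ℕ} (M : Rep K Q d) : Prop :=
  ∃ L : List (Σ e : Q.V → ℕ, Rep K Q e), (∀ p ∈ L, IsBand K p.2) ∧ IsDirectSumOf K M L

/-- A regular irreducible component: the generic module of `C` is a direct sum
of band modules. -/
def IsGenericallyBands {Q : Quiv} {d : Q.V → ℕ} (C : Set (Rep K Q d)) : Prop :=
  ∃ U : Set (Rep K Q d), IsOpen U ∧ (U ∩ C).Nonempty ∧ ∀ M ∈ U ∩ C, IsSumOfBands K M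

end ModuliPaper
namespace ModuliPaper

variable (K : Type) [Field K]

/- --------------------- tame and Schur-tame --------------------- -/

/-- A one-parameter algebraic family of `d`-dimensional representations defined
over a localization `K[t]_f` of `K[t]`: a free `K[t]_f`-module structure is
encoded by matrices of polynomials divided by a power of `f`. -/
structure ParamFamily (Q : Quiv) (d : Q.V → ℕ) where
  f : Polynomial K
  hf : f ≠ 0
  k : ℕ
  num : ∀ a : Q.Ar, Matrix (Fin (d (Q.t a))) (Fin (d (Q.s a))) (Polynomial K)

/-- The member of the family at the parameter `lam` (i.e. `T ⊗_{K[t]_f} K[t]/(t-lam)`). -/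
noncomputable def ParamFamily.evalAt {Q : Quiv} {d : Q.V → ℕ} (F : ParamFamily K Q d)
    (lam : K) : Rep K Q d :=
  ⟨fun a => Matrix.of fun i j =>
    Polynomial.eval lam (F.num a i j) / (Polynomial.eval lam F.f) ^ F.k⟩

/-- The algebra with module varieties `MV` is Schur-tame: for every dimension
vector `d` there are finitely many one-parameter families of `d`-dimensional
modules, each consisting of pairwise non-isomorphic Schur modules (a
Schur-embedding `T_i ⊗_{R_i} -`), such that every `d`-dimensional Schur module
— up to finitely many isomorphism classes — belongs to one of the families. -/
noncomputable def IsSchurTame {Q : Quiv} (MV : ∀ d : Q.V → ℕ, Set (Rep K Q d)) : Prop :=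
  ∀ d : Q.V → ℕ, ∃ (n : ℕ) (F : Fin n → ParamFamily K Q d),
    (∀ i lam, Polynomial.eval lam (F i).f ≠ 0 →
      (F i).evalAt K lam ∈ MV d ∧ IsSchur K ((F i).evalAt K lam)) ∧
    (∀ i lam₁ lam₂, Polynomial.eval lam₁ (F i).f ≠ 0 → Polynomial.eval lam₂ (F i).f ≠ 0 →
      Iso K ((F i).evalAt K lam₁) ((F i).evalAt K lam₂) → lam₁ = lam₂) ∧
    ∃ Exc : Set (Rep K Q d), Exc.Finite ∧
      ∀ M ∈ MV d, IsSchur K M →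
        (∃ i lam, Polynomial.eval lam (F i).f ≠ 0 ∧ Iso K M ((F i).evalAt K lam)) ∨
        (∃ E ∈ Exc, Iso K M E)

/-- The algebra with module varieties `MV` is tame: for every dimension vector
`d` there are finitely many one-parameter families of `d`-dimensional modules,
each consisting of pairwise non-isomorphic indecomposable modules (a
representation embedding `T_i ⊗_{R_i} -`), such that every `d`-dimensional
indecomposable module — up to finitely many isomorphism classes — belongs to
one of the families. -/
noncomputable def IsTame {Q : Quiv} (MV : ∀ d : Q.V → ℕ, Set (Rep K Q d)) : Prop :=
  ∀ d : Q.V → ℕ, ∃ (n : ℕ) (F : Fin n → ParamFamily K Q d),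
    (∀ i lam, Polynomial.eval lam (F i).f ≠ 0 →
      (F i).evalAt K lam ∈ MV d ∧ Indec K ((F i).evalAt K lam)) ∧
    (∀ i lam₁ lam₂, Polynomial.eval lam₁ (F i).f ≠ 0 → Polynomial.eval lam₂ (F i).f ≠ 0 →
      Iso K ((F i).evalAt K lam₁) ((F i).evalAt K lam₂) → lam₁ = lam₂) ∧
    ∃ Exc : Set (Rep K Q d), Exc.Finite ∧
      ∀ M ∈ MV d, Indec K M →
        (∃ i lam, Polynomial.eval lam (F i).f ≠ 0 ∧ Iso K M ((F i).evalAt K lam)) ∨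
        (∃ E ∈ Exc, Iso K M E)

/- --------------------- strictly wild algebras --------------------- -/

/-- The representation of `Q` of dimension vector `m • e` obtained from a
template `T` of matrices over the free algebra `K⟨x,y⟩` (encoding an
`A`-`K⟨x,y⟩`-bimodule free of finite rank over `K⟨x,y⟩`) by specializing
`(x,y)` to the pair of `m × m` matrices `(X,Y)`. -/
noncomputable def blockRep {Q : Quiv} (e : Q.V → ℕ) (m : ℕ)
    (T : ∀ a : Q.Ar, Matrix (Fin (e (Q.t a))) (Fin (e (Q.s a))) (FreeAlgebra K (Fin 2)))
    (X Y : Matrix (Fin m) (Fin m) K) : Rep K Q (fun x => e x * m) :=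
  ⟨fun a => Matrix.of fun i j =>
    (FreeAlgebra.lift K ![X, Y] (T a (finProdFinEquiv.symm i).1 (finProdFinEquiv.symm j).1))
      (finProdFinEquiv.symm i).2 (finProdFinEquiv.symm j).2⟩

/-- The block-diagonal family of matrices induced by an `m' × m` matrix `ψ`:
the image of a morphism of `K⟨x,y⟩`-modules under the functor `T ⊗ -`. -/
def blockify {Q : Quiv} (e : Q.V → ℕ) {m m' : ℕ} (ψ : Matrix (Fin m') (Fin m) K) :
    ∀ x : Q.V, Matrix (Fin (e x * m')) (Fin (e x * m)) K :=
  fun _ => Matrix.of fun i j =>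
    if (finProdFinEquiv.symm i).1 = (finProdFinEquiv.symm j).1 then
      ψ (finProdFinEquiv.symm i).2 (finProdFinEquiv.symm j).2
    else 0

/-- Strict wildness of the algebra with module varieties `MV`: there is an exact
`K`-linear functor `mod K⟨x,y⟩ → mod A`, given by tensoring with a bimodule
free of finite rank over `K⟨x,y⟩` (encoded by a template `T`), which is fully
faithful. -/
noncomputable def IsStrictlyWild {Q : Quiv} (MV : ∀ d : Q.V → ℕ, Set (Rep K Q d)) : Prop :=
  ∃ (e : Q.V → ℕ)
    (T : ∀ a : Q.Ar, Matrix (Fin (e (Q.t a))) (Fin (e (Q.s a))) (FreeAlgebra K (Fin 2))),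
    (∀ (m : ℕ) (X Y : Matrix (Fin m) (Fin m) K),
      blockRep K e m T X Y ∈ MV (fun x => e x * m)) ∧
    (∀ (m m' : ℕ) (X Y : Matrix (Fin m) (Fin m) K) (X' Y' : Matrix (Fin m') (Fin m') K),
      -- functoriality: morphisms of `K⟨x,y⟩`-modules map to morphisms
      (∀ ψ : Matrix (Fin m') (Fin m) K, ψ * X = X' * ψ → ψ * Y = Y' * ψ →
        IsHom K (blockRep K e m T X Y) (blockRep K e m' T X' Y') (blockify K e ψ)) ∧
      -- faithfulness
      (∀ ψ₁ ψ₂ : Matrix (Fin m') (Fin m) K, blockify (Q := Q) K e ψ₁ = blockify K e ψ₂ → ψ₁ = ψ₂) ∧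
      -- fullness
      (∀ φ, IsHom K (blockRep K e m T X Y) (blockRep K e m' T X' Y') φ →
        ∃ ψ : Matrix (Fin m') (Fin m) K, ψ * X = X' * ψ ∧ ψ * Y = Y' * ψ ∧ φ = blockify K e ψ))

/- --------------------- θ-stable decompositions --------------------- -/

/-- The list of representations `N i j`, `j < m i`, over the indices `i` with
`i < l`. -/
def famList {Q : Quiv} {nn : ℕ} (dd : Fin nn → Q.V → ℕ) (m : Fin nn → ℕ) (l : ℕ)
    (N : ∀ i : Fin nn, Fin (m i) → Rep K Q (dd i)) : List (Σ e : Q.V → ℕ, Rep K Q e) :=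
  ((List.finRange nn).filter (fun i : Fin nn => decide ((i : ℕ) < l))).flatMap
    (fun i : Fin nn => (List.finRange (m i)).map (fun j => ⟨dd i, N i j⟩))

/-- A θ-stable decomposition `C = m₀·C₀ ∔ m₁·C₁ ∔ ⋯`: for the generic module
`M ∈ C^{ss}_θ`, the associated θ-polystable module `gr_θ(M)` (the unique
polystable module in the closure of the orbit of `M` within the semistable
locus) is a direct sum of θ-stable modules, `m i` of which belong to `Cs i`. -/
def ThetaStableDecomp {Q : Quiv} {d : Q.V → ℕ} (C : Set (Rep K Q d)) (θ : Q.V → ℤ)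
    {nn : ℕ} (dd : Fin nn → Q.V → ℕ) (m : Fin nn → ℕ)
    (Cs : ∀ i, Set (Rep K Q (dd i))) : Prop :=
  ∃ U : Set (Rep K Q d), IsOpen U ∧ (U ∩ C).Nonempty ∧
    ∀ M ∈ U ∩ C, IsSemiStable K θ M ∧
      ∃ N : ∀ i, Fin (m i) → Rep K Q (dd i),
        (∀ i j, N i j ∈ Cs i ∧ IsStable K θ (N i j)) ∧
        ∃ P ∈ closure (glOrbit K M), IsSemiStable K θ P ∧
          IsDirectSumOf K P (famList K dd m nn N)

/-- The dimension vector `∑_{i < l} m i • dd i`. -/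
def belowDim {Q : Quiv} {nn : ℕ} (dd : Fin nn → Q.V → ℕ) (m : Fin nn → ℕ) (l : ℕ) :
    Q.V → ℕ :=
  fun x => ∑ i ∈ Finset.univ.filter (fun i : Fin nn => (i : ℕ) < l), m i * dd i x

/-- The direct sum locus `C₀^{⊕ m₀} ⊕ ⋯ ⊕ C_{l-1}^{⊕ m_{l-1}}`. -/
def sumLocusBelow {Q : Quiv} {nn : ℕ} (dd : Fin nn → Q.V → ℕ) (m : Fin nn → ℕ) (l : ℕ)
    (Cs : ∀ i, Set (Rep K Q (dd i))) : Set (Rep K Q (belowDim dd m l)) :=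
  {M | ∃ N : ∀ i, Fin (m i) → Rep K Q (dd i),
    (∀ (i : Fin nn) (j : Fin (m i)), (i : ℕ) < l → N i j ∈ Cs i) ∧ IsDirectSumOf K M (famList K dd m l N)}

/- --------------------- extensions --------------------- -/

/-- The extension of `N` by `M` (`0 → M → Z → N → 0`) determined by the blocks
`E`: `Z(a) = [[M(a), E(a)], [0, N(a)]]`. -/
def triSum {Q : Quiv} {d₁ d₂ : Q.V → ℕ} (M : Rep K Q d₁) (N : Rep K Q d₂)
    (E : ∀ a : Q.Ar, Matrix (Fin (d₁ (Q.t a))) (Fin (d₂ (Q.s a))) K) :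
    Rep K Q (d₁ + d₂) :=
  ⟨fun a => Matrix.reindex finSumFinEquiv finSumFinEquiv
    (Matrix.fromBlocks (M.mat a) (E a) 0 (N.mat a))⟩

/-- `ext¹_A(D, E) = 0`: the minimal dimension of `Ext¹_A(X,Y)` over
`(X,Y) ∈ D × E` vanishes, i.e. there is a pair `(X,Y) ∈ D × E` all of whose
extensions (inside the module variety `MV`) split. -/
def Ext1Vanishes {Q : Quiv} (MV : ∀ e : Q.V → ℕ, Set (Rep K Q e)) {dX dY : Q.V → ℕ}
    (D : Set (Rep K Q dX)) (E : Set (Rep K Q dY)) : Prop :=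
  ∃ X ∈ D, ∃ Y ∈ E, ∀ B, triSum K Y X B ∈ MV (dY + dX) →
    Iso K (triSum K Y X B) (dsum K Y X)

end ModuliPaper

/-!
At a vertex with two incoming and two outgoing arrows, the length-two paths outside `I` form a
partial matching between incoming and outgoing arrows, so one of the two bijections between them
consists of paths in `I`; at smaller vertices a single path in `I` suffices. These local
matchings glue to a partial injection `Next` on arrows. Since `Q` is acyclic, its threads are
paths on which composable arrows are consecutive, so colouring each arrow by its thread gives
`I_c ⊆ I`, and the local matchings leaving at most one composable arrow unmatched is exactly the
gentle condition for `I_c`.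
-/
namespace ModuliPaper

section Matching

variable {α : Type*}

theorem AtMostTwo.subsingleton_ne {s : Set α} (h : AtMostTwo s) {c : α} (hc : c ∈ s) :
    {b | b ∈ s ∧ b ≠ c}.Subsingleton := by
  rintro u ⟨hu, huc⟩ v ⟨hv, hvc⟩
  rcases h u hu v hv c hc with h | h | h
  exacts [h, absurd h huc, absurd h hvc]

theorem AtMostTwo.eq_or_eq {s : Set α} (h : AtMostTwo s) {a₁ a₂ : α} (h₁ : a₁ ∈ s)
    (h₂ : a₂ ∈ s) (hne : a₁ ≠ a₂) {a : α} (ha : a ∈ s) : a = a₁ ∨ a = a₂ := by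
  rcases h a ha a₁ h₁ a₂ h₂ with h | h | h
  exacts [Or.inl h, Or.inr h, absurd h hne]

structure IsSaturatingMatching (In Out : Set α) (E M : α → α → Prop) : Prop where
  mem_mem_rel : ∀ a b, M a b → a ∈ In ∧ b ∈ Out ∧ E a b
  right_unique : Relator.RightUnique M
  left_unique : Relator.LeftUnique M
  subsingleton_out : ∀ a ∈ In, {b | b ∈ Out ∧ ¬ M a b}.Subsingleton
  subsingleton_in : ∀ b ∈ Out, {a | a ∈ In ∧ ¬ M a b}.Subsingleton

theorem IsSaturatingMatching.flip {In Out : Set α} {E M : α → α → Prop}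
    (h : IsSaturatingMatching In Out E M) :
    IsSaturatingMatching Out In (flip E) (flip M) where
  mem_mem_rel a b hab := by
    obtain ⟨hb, ha, hE⟩ := h.mem_mem_rel b a hab
    exact ⟨ha, hb, hE⟩
  right_unique _ _ _ h₁ h₂ := h.left_unique h₁ h₂
  left_unique _ _ _ h₁ h₂ := h.right_unique h₁ h₂
  subsingleton_out := h.subsingleton_in
  subsingleton_in := h.subsingleton_out

variable {In Out : Set α} {E : α → α → Prop}

theorem exists_isSaturatingMatching_of_subsingleton (hOut : Out.Subsingleton)
    (hIn : AtMostTwo In) (hE : ∀ b ∈ Out, {a | a ∈ In ∧ ¬ E a b}.Subsingleton) :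
    ∃ M, IsSaturatingMatching In Out E M := by
  by_cases hedge : ∃ a₀ ∈ In, ∃ b₀ ∈ Out, E a₀ b₀
  · obtain ⟨a₀, ha₀, b₀, hb₀, hE₀⟩ := hedge
    refine ⟨fun a b => a = a₀ ∧ b = b₀, ⟨?_, ?_, ?_, ?_, ?_⟩⟩
    · rintro a b ⟨rfl, rfl⟩
      exact ⟨ha₀, hb₀, hE₀⟩
    · rintro _ _ _ ⟨-, rfl⟩ ⟨-, rfl⟩
      rfl
    · rintro _ _ _ ⟨rfl, -⟩ ⟨rfl, -⟩
      rfl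
    · exact fun _ _ => hOut.anti fun b hb => hb.1
    · intro b hb
      refine (hIn.subsingleton_ne ha₀).anti fun a ⟨ha, hna⟩ => ⟨ha, fun h => hna ⟨h, ?_⟩⟩
      exact hOut hb hb₀
  · push Not at hedge
    refine ⟨fun _ _ => False, ⟨fun _ _ => False.elim, fun _ _ _ => False.elim,
      fun _ _ _ => False.elim, fun _ _ => hOut.anti fun b hb => hb.1, fun b hb => ?_⟩⟩
    exact (hE b hb).anti fun a ⟨ha, _⟩ => ⟨ha, hedge a ha b hb⟩

theorem exists_isSaturatingMatching_of_nontrivial (hIn : AtMostTwo In) (hOut : AtMostTwo Out)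
    (hE₁ : ∀ a ∈ In, {b | b ∈ Out ∧ ¬ E a b}.Subsingleton)
    (hE₂ : ∀ b ∈ Out, {a | a ∈ In ∧ ¬ E a b}.Subsingleton)
    {a₁ a₂ b₁ b₂ : α} (ha₁ : a₁ ∈ In) (ha₂ : a₂ ∈ In) (ha : a₁ ≠ a₂)
    (hb₁ : b₁ ∈ Out) (hb₂ : b₂ ∈ Out) (hb : b₁ ≠ b₂) :
    ∃ M, IsSaturatingMatching In Out E M := by
  -- the pairs outside `E` form a partial matching, so they avoid one of the two perfect matchings
  obtain ⟨c₁, c₂, hc₁, hc₂, hc, hE₁c, hE₂c⟩ :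
      ∃ c₁ c₂, c₁ ∈ Out ∧ c₂ ∈ Out ∧ c₁ ≠ c₂ ∧ E a₁ c₁ ∧ E a₂ c₂ := by
    by_cases hstraight : E a₁ b₁ ∧ E a₂ b₂
    · exact ⟨b₁, b₂, hb₁, hb₂, hb, hstraight⟩
    rw [not_and_or] at hstraight
    refine ⟨b₂, b₁, hb₂, hb₁, hb.symm, ?_, ?_⟩ <;> by_contra hn <;> rcases hstraight with h | h
    · exact hb (hE₁ a₁ ha₁ ⟨hb₁, h⟩ ⟨hb₂, hn⟩)
    · exact ha (hE₂ b₂ hb₂ ⟨ha₁, hn⟩ ⟨ha₂, h⟩)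
    · exact ha (hE₂ b₁ hb₁ ⟨ha₁, h⟩ ⟨ha₂, hn⟩)
    · exact hb (hE₁ a₂ ha₂ ⟨hb₁, hn⟩ ⟨hb₂, h⟩)
  refine ⟨fun a b => a = a₁ ∧ b = c₁ ∨ a = a₂ ∧ b = c₂, ⟨?_, ?_, ?_, ?_, ?_⟩⟩
  · rintro a b (⟨rfl, rfl⟩ | ⟨rfl, rfl⟩)
    exacts [⟨ha₁, hc₁, hE₁c⟩, ⟨ha₂, hc₂, hE₂c⟩]
  · rintro a b b' (⟨rfl, rfl⟩ | ⟨rfl, rfl⟩) (⟨h, rfl⟩ | ⟨h, rfl⟩) <;> grind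
  · rintro a a' b (⟨rfl, rfl⟩ | ⟨rfl, rfl⟩) (⟨rfl, h⟩ | ⟨rfl, h⟩) <;> grind
  · intro a ha'
    rcases hIn.eq_or_eq ha₁ ha₂ ha ha' with rfl | rfl
    · exact (hOut.subsingleton_ne hc₁).anti fun b ⟨hb, hn⟩ => ⟨hb, fun h => hn (Or.inl ⟨rfl, h⟩)⟩
    · exact (hOut.subsingleton_ne hc₂).anti fun b ⟨hb, hn⟩ => ⟨hb, fun h => hn (Or.inr ⟨rfl, h⟩)⟩
  · intro b hb'
    rcases hOut.eq_or_eq hc₁ hc₂ hc hb' with rfl | rfl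
    · exact (hIn.subsingleton_ne ha₁).anti fun a ⟨ha, hn⟩ => ⟨ha, fun h => hn (Or.inl ⟨h, rfl⟩)⟩
    · exact (hIn.subsingleton_ne ha₂).anti fun a ⟨ha, hn⟩ => ⟨ha, fun h => hn (Or.inr ⟨h, rfl⟩)⟩

theorem exists_isSaturatingMatching (hIn : AtMostTwo In) (hOut : AtMostTwo Out)
    (hE₁ : ∀ a ∈ In, {b | b ∈ Out ∧ ¬ E a b}.Subsingleton)
    (hE₂ : ∀ b ∈ Out, {a | a ∈ In ∧ ¬ E a b}.Subsingleton) :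
    ∃ M, IsSaturatingMatching In Out E M := by
  by_cases hOut₁ : Out.Subsingleton
  · exact exists_isSaturatingMatching_of_subsingleton hOut₁ hIn hE₂
  by_cases hIn₁ : In.Subsingleton
  · obtain ⟨M, hM⟩ := exists_isSaturatingMatching_of_subsingleton (E := flip E) hIn₁ hOut hE₁
    exact ⟨flip M, hM.flip⟩
  obtain ⟨a₁, ha₁, a₂, ha₂, ha⟩ := Set.not_subsingleton_iff.mp hIn₁
  obtain ⟨b₁, hb₁, b₂, hb₂, hb⟩ := Set.not_subsingleton_iff.mp hOut₁
  exact exists_isSaturatingMatching_of_nontrivial hIn hOut hE₁ hE₂ ha₁ ha₂ ha hb₁ hb₂ hb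

end Matching

namespace Quiv

variable {Q : Quiv}

def hom (a : Q.Ar) : Q.s a ⟶ Q.t a := ⟨a, rfl, rfl⟩

theorem IsAcyclic.isEmpty_path_t_s (hQ : Q.IsAcyclic) (a : Q.Ar) :
    IsEmpty (Quiver.Path (Q.t a) (Q.s a)) :=
  ⟨fun p => by simpa using congrArg Quiver.Path.length (hQ _ (p.cons (Q.hom a)))⟩

theorem IsAcyclic.ncard_path_to_lt (hQ : Q.IsAcyclic) (a : Q.Ar) :
    {x | Nonempty (Quiver.Path x (Q.s a))}.ncard <
      {x | Nonempty (Quiver.Path x (Q.t a))}.ncard := by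
  have hsub : {x | Nonempty (Quiver.Path x (Q.s a))} ⊆ {x | Nonempty (Quiver.Path x (Q.t a))} :=
    fun _ ⟨p⟩ => ⟨p.cons (Q.hom a)⟩
  exact Set.ncard_lt_ncard ((Set.ssubset_iff_of_subset hsub).2
    ⟨Q.t a, ⟨.nil⟩, fun ⟨p⟩ => (hQ.isEmpty_path_t_s a).false p⟩)

theorem IsAcyclic.ncard_path_from_lt (hQ : Q.IsAcyclic) (a : Q.Ar) :
    {y | Nonempty (Quiver.Path (Q.t a) y)}.ncard <
      {y | Nonempty (Quiver.Path (Q.s a) y)}.ncard := by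
  have hsub : {y | Nonempty (Quiver.Path (Q.t a) y)} ⊆ {y | Nonempty (Quiver.Path (Q.s a) y)} :=
    fun _ ⟨p⟩ => ⟨(Q.hom a).toPath.comp p⟩
  exact Set.ncard_lt_ncard ((Set.ssubset_iff_of_subset hsub).2
    ⟨Q.s a, ⟨.nil⟩, fun ⟨p⟩ => (hQ.isEmpty_path_t_s a).false p⟩)

theorem nonempty_path_of_mem_of_isChain {x v : Q.Ar} {L : List Q.Ar}
    (hL : (x :: L).IsChain (fun a b => Q.t a = Q.s b)) (hv : v ∈ L) :
    Nonempty (Quiver.Path (Q.t x) (Q.s v)) := by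
  induction L generalizing x with
  | nil => cases hv
  | cons y L ih =>
    obtain ⟨hxy, hL⟩ := List.isChain_cons_cons.1 hL
    rcases List.mem_cons.1 hv with rfl | hv
    · exact ⟨hxy ▸ .nil⟩
    · obtain ⟨p⟩ := ih hL hv
      exact ⟨hxy ▸ (Q.hom y).toPath.comp p⟩

theorem IsAcyclic.nodup_of_isChain (hQ : Q.IsAcyclic) {L : List Q.Ar}
    (hL : L.IsChain (fun a b => Q.t a = Q.s b)) : L.Nodup := by
  induction L with
  | nil => exact .nil
  | cons x L ih =>
    refine List.nodup_cons.2 ⟨fun hx => ?_, ih hL.tail⟩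
    obtain ⟨p⟩ := nonempty_path_of_mem_of_isChain hL hx
    exact (hQ.isEmpty_path_t_s x).false p

/-- A path in an acyclic quiver visits no vertex twice. -/
theorem IsAcyclic.infix_of_mem_of_isChain (hQ : Q.IsAcyclic) {L : List Q.Ar}
    (hL : L.IsChain (fun a b => Q.t a = Q.s b)) {u v : Q.Ar} (hu : u ∈ L) (hv : v ∈ L)
    (huv : Q.t u = Q.s v) : [u, v] <:+: L := by
  induction L with
  | nil => cases hu
  | cons x L ih =>
    rcases List.mem_cons.1 hu with hux | huL
    · subst hux
      rcases List.mem_cons.1 hv with hvu | hvL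
      · subst hvu
        exact (hQ.isEmpty_path_t_s v).elim' (huv ▸ .nil)
      cases L with
      | nil => cases hvL
      | cons y L =>
        obtain ⟨huy, hL'⟩ := List.isChain_cons_cons.1 hL
        rcases List.mem_cons.1 hvL with rfl | hvL'
        · exact ⟨[], L, rfl⟩
        obtain ⟨p⟩ := nonempty_path_of_mem_of_isChain hL' hvL'
        exact (hQ.isEmpty_path_t_s y).elim' (huv.symm.trans huy ▸ p)
    · rcases List.mem_cons.1 hv with hvx | hvL
      · subst hvx
        obtain ⟨p⟩ := nonempty_path_of_mem_of_isChain hL huL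
        exact (hQ.isEmpty_path_t_s v).elim' (p.comp (huv ▸ (Q.hom u).toPath))
      · exact (ih hL.tail huL hvL).trans (List.infix_cons (List.infix_refl L))

end Quiv

/-- `Next a b` says that `b` continues the thread of `a`; maximal threads become the
colour classes. -/
structure ArrowMatching (Q : Quiv) where
  Next : Q.Ar → Q.Ar → Prop
  comp : ∀ {a b}, Next a b → Q.t a = Q.s b
  right_unique : Relator.RightUnique Next
  left_unique : Relator.LeftUnique Next

namespace ArrowMatching

variable {Q : Quiv} (T : ArrowMatching Q)

def IsSaturated : Prop :=
  ∀ a, AtMostOne {b | Q.t a = Q.s b ∧ ¬ T.Next a b} ∧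
    AtMostOne {b | Q.t b = Q.s a ∧ ¬ T.Next b a}

open Classical in
noncomputable def first (hQ : Q.IsAcyclic) (a : Q.Ar) : Q.Ar :=
  if h : ∃ b, T.Next b a then first hQ h.choose else a
termination_by {x | Nonempty (Quiver.Path x (Q.s a))}.ncard
decreasing_by
  rw [← T.comp h.choose_spec]
  exact hQ.ncard_path_to_lt _

open Classical in
noncomputable def thread (hQ : Q.IsAcyclic) (a : Q.Ar) : List Q.Ar :=
  a :: if h : ∃ b, T.Next a b then thread hQ h.choose else []
termination_by {y | Nonempty (Quiver.Path (Q.s a) y)}.ncard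
decreasing_by
  rw [← T.comp h.choose_spec]
  exact hQ.ncard_path_from_lt _

variable (hQ : Q.IsAcyclic)

theorem first_of_not_exists {a : Q.Ar} (h : ¬∃ b, T.Next b a) : T.first hQ a = a := by
  rw [first, dif_neg h]

theorem first_of_next {a b : Q.Ar} (h : T.Next b a) : T.first hQ a = T.first hQ b := by
  have hex : ∃ b, T.Next b a := ⟨b, h⟩
  rw [first, dif_pos hex, T.left_unique hex.choose_spec h]

theorem not_exists_next_first (a : Q.Ar) : ¬∃ b, T.Next b (T.first hQ a) := by
  induction a using first.induct T hQ with
  | case1 a b ih => rwa [T.first_of_next hQ b.choose_spec]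
  | case2 a h => rwa [T.first_of_not_exists hQ h]

theorem thread_of_next {a b : Q.Ar} (h : T.Next a b) :
    T.thread hQ a = a :: T.thread hQ b := by
  have hex : ∃ b, T.Next a b := ⟨b, h⟩
  rw [thread, dif_pos hex, T.right_unique hex.choose_spec h]

theorem thread_of_not_exists {a : Q.Ar} (h : ¬∃ b, T.Next a b) : T.thread hQ a = [a] := by
  rw [thread, dif_neg h]

theorem self_mem_thread (a : Q.Ar) : a ∈ T.thread hQ a := by
  rw [thread]
  exact List.mem_cons_self

theorem head?_thread (a : Q.Ar) : (T.thread hQ a).head? = some a := by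
  rw [thread]
  rfl

theorem isChain_thread (a : Q.Ar) : (T.thread hQ a).IsChain T.Next := by
  induction a using thread.induct T hQ with
  | case1 a ih =>
    by_cases h : ∃ b, T.Next a b
    · rw [T.thread_of_next hQ h.choose_spec]
      exact (ih h).cons (by simpa [head?_thread] using h.choose_spec)
    · rw [T.thread_of_not_exists hQ h]
      exact List.isChain_singleton a

theorem isChain_comp_thread (a : Q.Ar) :
    (T.thread hQ a).IsChain (fun a b => Q.t a = Q.s b) :=
  (T.isChain_thread hQ a).imp fun _ _ => T.comp

theorem first_eq_of_mem_thread {a b : Q.Ar} (hb : b ∈ T.thread hQ a) :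
    T.first hQ b = T.first hQ a := by
  induction a using thread.induct T hQ with
  | case1 a ih =>
    by_cases h : ∃ c, T.Next a c
    · rw [T.thread_of_next hQ h.choose_spec] at hb
      rcases List.mem_cons.1 hb with rfl | hb
      · rfl
      · rw [ih h hb, T.first_of_next hQ h.choose_spec]
    · rw [T.thread_of_not_exists hQ h, List.mem_singleton] at hb
      rw [hb]

theorem mem_thread_of_next {r b c : Q.Ar} (hb : b ∈ T.thread hQ r) (hbc : T.Next b c) :
    c ∈ T.thread hQ r := by
  induction r using thread.induct T hQ with
  | case1 r ih =>
    by_cases h : ∃ x, T.Next r x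
    · rw [T.thread_of_next hQ h.choose_spec] at hb ⊢
      rcases List.mem_cons.1 hb with hbr | hb
      · subst hbr
        rw [T.right_unique hbc h.choose_spec]
        exact List.mem_cons_of_mem _ (T.self_mem_thread hQ _)
      · exact List.mem_cons_of_mem _ (ih h hb)
    · rw [T.thread_of_not_exists hQ h, List.mem_singleton] at hb
      exact absurd ⟨c, hb ▸ hbc⟩ h

theorem mem_thread_first (a : Q.Ar) : a ∈ T.thread hQ (T.first hQ a) := by
  induction a using first.induct T hQ with
  | case1 a h ih =>
    rw [T.first_of_next hQ h.choose_spec]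
    exact T.mem_thread_of_next hQ ih h.choose_spec
  | case2 a h =>
    rw [T.first_of_not_exists hQ h]
    exact T.self_mem_thread hQ a

theorem mem_thread_iff {s : Q.Ar} (hs : ¬∃ b, T.Next b s) (a : Q.Ar) :
    a ∈ T.thread hQ s ↔ T.first hQ a = s :=
  ⟨fun ha => (T.first_eq_of_mem_thread hQ ha).trans (T.first_of_not_exists hQ hs),
    by rintro rfl; exact T.mem_thread_first hQ a⟩

theorem next_iff {a b : Q.Ar} : T.Next a b ↔ Q.t a = Q.s b ∧ T.first hQ a = T.first hQ b := by
  refine ⟨fun h => ⟨T.comp h, (T.first_of_next hQ h).symm⟩, fun ⟨hab, hfirst⟩ => ?_⟩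
  have hb : b ∈ T.thread hQ (T.first hQ a) := hfirst ▸ T.mem_thread_first hQ b
  exact List.isChain_pair.1 ((T.isChain_thread hQ _).infix
    (hQ.infix_of_mem_of_isChain (T.isChain_comp_thread hQ _) (T.mem_thread_first hQ a) hb hab))

noncomputable def coloring : Coloring Q Q.Ar where
  c := T.first hQ
  isPath s := by
    by_cases hs : ∃ b, T.Next b s
    · exact ⟨[], List.nodup_nil,
        fun a => iff_of_false List.not_mem_nil fun h => T.not_exists_next_first hQ a (h ▸ hs),
        List.isChain_nil⟩
    · exact ⟨T.thread hQ s, hQ.nodup_of_isChain (T.isChain_comp_thread hQ s),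
        T.mem_thread_iff hQ hs, T.isChain_comp_thread hQ s⟩

theorem mem_colorRels_coloring {a b : Q.Ar} :
    (a, b) ∈ (colorRels (T.coloring hQ)).R ↔ T.Next a b :=
  (T.next_iff hQ).symm

theorem isGentle_colorRels_coloring
    (hdeg : ∀ x : Q.V, AtMostTwo {a | Q.s a = x} ∧ AtMostTwo {a | Q.t a = x})
    (hT : T.IsSaturated) : (colorRels (T.coloring hQ)).IsGentle := by
  refine ⟨hdeg, fun a => ?_, fun a => ⟨fun b₁ h₁ b₂ h₂ => ?_, fun b₁ h₁ b₂ h₂ => ?_⟩⟩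
  · simpa only [mem_colorRels_coloring] using hT a
  · exact T.right_unique ((T.mem_colorRels_coloring hQ).1 h₁) ((T.mem_colorRels_coloring hQ).1 h₂)
  · exact T.left_unique ((T.mem_colorRels_coloring hQ).1 h₁) ((T.mem_colorRels_coloring hQ).1 h₂)

end ArrowMatching

theorem MonRels.IsString.exists_arrowMatching {Q : Quiv} {R : MonRels Q} (hR : R.IsString) :
    ∃ T : ArrowMatching Q, T.IsSaturated ∧ ∀ a b, T.Next a b → R.pairIn a b := by
  have hlocal : ∀ x, ∃ M, IsSaturatingMatching {a | Q.t a = x} {b | Q.s b = x} R.pairIn M :=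
    fun x => exists_isSaturatingMatching (hR.1 x).2 (hR.1 x).1
      (fun a ha => Set.Subsingleton.anti (hR.2 a).1 fun b ⟨hb, hn⟩ => ⟨ha.trans hb.symm, hn⟩)
      (fun b hb => Set.Subsingleton.anti (hR.2 b).2 fun a ⟨ha, hn⟩ => ⟨ha.trans hb.symm, hn⟩)
  choose M hM using hlocal
  have hcomp : ∀ {a b}, M (Q.t a) a b → Q.t a = Q.s b :=
    fun h => ((hM _).mem_mem_rel _ _ h).2.1.symm
  refine ⟨⟨fun a b => M (Q.t a) a b, hcomp, fun _ _ _ h₁ h₂ => (hM _).right_unique h₁ h₂,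
    fun a₁ a₂ b (h₁ : M _ a₁ b) (h₂ : M _ a₂ b) => ?_⟩, fun a => ⟨?_, ?_⟩,
    fun a b h => ((hM _).mem_mem_rel _ _ h).2.2⟩
  · rw [(hcomp h₂).trans (hcomp h₁).symm] at h₂
    exact (hM _).left_unique h₁ h₂
  · exact Set.Subsingleton.anti ((hM (Q.t a)).subsingleton_out a rfl)
      fun b ⟨hb, hn⟩ => ⟨hb.symm, hn⟩
  · exact Set.Subsingleton.anti ((hM (Q.s a)).subsingleton_in a rfl)
      fun b ⟨hb, hn⟩ => ⟨hb, by rw [← hb]; exact hn⟩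

section ModuleVariety

variable (K : Type) [Field K]

theorem arrowEval_apply {Q : Quiv} {d : Q.V → ℕ} (M : Rep K Q d) {x y : Q.V}
    (e : x ⟶ y) (v : Fin (d x) → K) (i : Fin (d y)) :
    arrowEval K M e v i =
      ∑ k : Fin (d x), M.mat e.1 ((finCongr (congrArg d e.2.2)).symm i)
        ((finCongr (congrArg d e.2.1)).symm k) * v k := by
  obtain ⟨a, rfl, rfl⟩ := e
  simp [arrowEval, Matrix.mulVec, dotProduct]

theorem pathEval_path2_single_apply {Q : Quiv} {d : Q.V → ℕ} (M : Rep K Q d) {a b : Q.Ar}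
    (h : Q.t a = Q.s b) (i : Fin (d (Q.t b))) (j : Fin (d (Q.s a))) :
    pathEval K M (path2 a b h) (Pi.single j 1) i =
      ∑ k : Fin (d (Q.t a)), M.mat b i (finCongr (congrArg d h) k) * M.mat a k j := by
  simp only [path2, pathEval, LinearMap.comp_apply, LinearMap.id_apply, arrowEval_apply,
    Pi.single_apply, mul_ite, mul_one, mul_zero, Finset.sum_ite_eq', Finset.mem_univ, if_true]
  rfl

theorem monModVar_subset_pairModVar {Q : Quiv} {R : MonRels Q} {P : PairRels Q}
    (hP : ∀ p ∈ P.R, R.pairIn p.1 p.2) (d : Q.V → ℕ) :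
    monModVar K R d ⊆ pairModVar K P d := by
  intro M hM a b hab i j
  obtain ⟨h, hmem⟩ := hP _ hab
  rw [← pathEval_path2_single_apply K M h, hM _ hmem]
  rfl

end ModuleVariety

theorem acyclic_string_is_quotient_of_gentle_general
    (K : Type) [Field K]
    (Q : Quiv) (R : MonRels Q) (hstring : R.IsString) (hacyclic : Q.IsAcyclic) :
    ∃ (S : Type) (_ : Fintype S) (col : Coloring Q S),
      (∀ a b : Q.Ar, Q.t a = Q.s b → col.c a = col.c b → R.pairIn a b) ∧
      (colorRels col).IsGentle ∧
      ∀ d : Q.V → ℕ, monModVar K R d ⊆ pairModVar K (colorRels col) d := by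
  obtain ⟨T, hsat, hpair⟩ := hstring.exists_arrowMatching
  have hcolor : ∀ a b, (a, b) ∈ (colorRels (T.coloring hacyclic)).R → R.pairIn a b :=
    fun a b h => hpair a b ((T.mem_colorRels_coloring hacyclic).1 h)
  exact ⟨Q.Ar, inferInstance, T.coloring hacyclic, fun a b hab hc => hcolor a b ⟨hab, hc⟩,
    T.isGentle_colorRels_coloring hacyclic hstring.1 hsat,
    monModVar_subset_pairModVar K fun p hp => hcolor p.1 p.2 hp⟩

/-- Lemma 4.5.  Let `A = KQ/I` be an acyclic string algebra.
Then there is a coloring `c` of `Q` such that the induced ideal `I_c` is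
contained in `I`.  In particular, `KQ/I_c` is an acyclic gentle algebra with
the same quiver and `A` is a quotient of it (so every `A`-module is a
`KQ/I_c`-module). -/
theorem acyclic_string_is_quotient_of_gentle
    (K : Type) [Field K] [IsAlgClosed K] [CharZero K]
    (Q : Quiv) (R : MonRels Q) (hstring : R.IsString) (hacyclic : Q.IsAcyclic) :
    ∃ (S : Type) (_ : Fintype S) (col : Coloring Q S),
      (∀ a b : Q.Ar, Q.t a = Q.s b → col.c a = col.c b → R.pairIn a b) ∧
      (colorRels col).IsGentle ∧
      ∀ d : Q.V → ℕ, monModVar K R d ⊆ pairModVar K (colorRels col) d :=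
  acyclic_string_is_quotient_of_gentle_general K Q R hstring hacyclic

end ModuliPaper
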